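/- Let M and K be positive integers and let X, Y ∈ ℝ^{M×K} be matrices such that X Xᵀ is invertible and such that Y is the one-sample shift of X, i.e. the i-th row of Y equals the (i+1)-th row of X for every i ∈ {1, …, M−1} (equivalently, the columns satisfy x_{k+1}[i] = x_k[i+1] for i < M). Then the least-squares solution Ã = Y Xᵀ (X Xᵀ)⁻¹ is a companion-type matrix: for every i ∈ {1, …, M−1}, the i-th row of Ã is the standard basis row vector e_{i+1}ᵀ (i.e. Ã[i,j] = 1 if j = i+1 and Ã[i,j] = 0 otherwise); only the last row of Ã, the row vector α = (α_1, …, α_M), is unconstrained. -/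
import Mathlib


open Matrix Finset

/-- **Companion structure of the least-squares estimate.**
If `Y` is the one-sample shift of `X` (the `i`-th row of `Y` equals the
`(i+1)`-th row of `X` for every `i < M−1`, in 0-based indexing) and `X Xᵀ` is
invertible, then `Ã = Y Xᵀ (X Xᵀ)⁻¹` is a companion-type matrix: each of its
rows except the last one is the shifted standard basis row vector, i.e.
`Ã[i,j] = 1` if `j = i+1` and `Ã[i,j] = 0` otherwise, for every `i` with
`i+1 < M`.  Only the last row of `Ã` is unconstrained. -/
theorem leastSquares_companion_structure
    (M K : ℕ) (hM : 0 < M) (hK : 0 < K)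
    (X Y : Matrix (Fin M) (Fin K) ℝ)
    (hX : IsUnit (X * X.transpose))
    (hshift : ∀ (i : Fin M) (hi : (i : ℕ) + 1 < M) (k : Fin K),
      Y i k = X ⟨(i : ℕ) + 1, hi⟩ k)
    (Atilde : Matrix (Fin M) (Fin M) ℝ)
    (hAtilde : Atilde = Y * X.transpose * (X * X.transpose)⁻¹) :
    ∀ (i : Fin M), (i : ℕ) + 1 < M → ∀ (j : Fin M),
      Atilde i j = if (j : ℕ) = (i : ℕ) + 1 then 1 else 0 := by
  intro i hi j
  have hinv : X * X.transpose * (X * X.transpose)⁻¹ = 1 :=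
    Matrix.mul_nonsing_inv _ ((Matrix.isUnit_iff_isUnit_det _).mp hX)
  have key : Atilde i j = (X * X.transpose * (X * X.transpose)⁻¹) ⟨(i : ℕ) + 1, hi⟩ j := by
    subst hAtilde
    rw [Matrix.mul_assoc, Matrix.mul_assoc, Matrix.mul_apply, Matrix.mul_apply]
    exact Finset.sum_congr rfl fun k _ => by rw [hshift i hi k]
  rw [key, hinv, Matrix.one_apply]
  simp [Fin.ext_iff, eq_comm]
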